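/- Let C ≥ 1, let s, ε : Fin C → ℝ, let p = softmax(s) and p* = softmax(s + ε). Then KL(p‖p*) ≤ (1/2) · ∑_{i=1}^{C} ε_i². (Non-asymptotic form, with constant α = 1/2, of the paper's proposition that the Kullback-Leibler divergence is bounded by the anchoring loss ∑_i ε_i².) -/

import Mathlib

/-!
Writing `p = softmax s`, one has `softmax (s + ε) i = p i * exp (ε i) / ∑ k, p k * exp (ε k)`,
so `KL(p‖softmax (s + ε)) = log 𝔼_p[exp ε] - 𝔼_p[ε]` is the centred cumulant generating function
of `ε` under `p` at `1`. Each `ε i` lies in `[-R, R]` with `R = √(∑ i, ε i ^ 2)`, and Hoeffding's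
lemma bounds that quantity by `(2R)² / 8 = R² / 2`.
-/

/-- Softmax of a logit vector `s : Fin C → ℝ`. -/
noncomputable def softmax {C : ℕ} (s : Fin C → ℝ) (i : Fin C) : ℝ :=
  Real.exp (s i) / ∑ k, Real.exp (s k)

open Real Finset ProbabilityTheory MeasureTheory

theorem log_sum_mul_exp_le_of_mem_Icc {ι : Type*} [Fintype ι] (w x : ι → ℝ)
    (hw : ∀ i, 0 ≤ w i) (hw1 : ∑ i, w i = 1) {a b : ℝ} (hx : ∀ i, x i ∈ Set.Icc a b) :
    log (∑ i, w i * exp (x i)) ≤ ∑ i, w i * x i + (b - a) ^ 2 / 8 := by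
  let _ : MeasurableSpace ι := ⊤
  let p : PMF ι := PMF.ofFintype (fun i ↦ ENNReal.ofReal (w i)) (by
    rw [← ENNReal.ofReal_sum_of_nonneg fun i _ ↦ hw i, hw1, ENNReal.ofReal_one])
  have hp : ∀ i, (p i).toReal = w i := fun i ↦ ENNReal.toReal_ofReal (hw i)
  have hoeffding := (hasSubgaussianMGF_of_mem_Icc (μ := p.toMeasure) (X := x)
    (measurable_of_countable x).aemeasurable (ae_of_all _ hx)).mgf_le 1
  have hconst : ((‖b - a‖₊ / 2) ^ 2 : NNReal) * (1 : ℝ) ^ 2 / 2 = (b - a) ^ 2 / 8 := by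
    push_cast
    rw [Real.norm_eq_abs, div_pow, sq_abs]
    ring
  simp only [mgf, PMF.integral_eq_sum, hp, smul_eq_mul, one_mul] at hoeffding
  simp_rw [exp_sub, mul_div_assoc', ← sum_div, hconst, div_le_iff₀ (exp_pos _), ← exp_add]
    at hoeffding
  have hS : 0 < ∑ i, w i * exp (x i) := by
    obtain ⟨i, -, hi⟩ := exists_lt_of_sum_lt (show ∑ i, (0 : ℝ) < ∑ i, w i by simp [hw1])
    exact sum_pos' (fun j _ ↦ mul_nonneg (hw j) (exp_pos _).le) ⟨i, mem_univ _, by positivity⟩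
  rwa [log_le_iff_le_exp hS, add_comm]

theorem abs_le_sqrt_sum_sq {ι : Type*} [Fintype ι] (x : ι → ℝ) (i : ι) :
    |x i| ≤ √(∑ j, x j ^ 2) :=
  abs_le_sqrt (single_le_sum (fun j _ ↦ sq_nonneg (x j)) (mem_univ i))

section Softmax

variable {C : ℕ}

theorem sum_exp_pos (s : Fin C → ℝ) (i : Fin C) : 0 < ∑ k, exp (s k) :=
  sum_pos (fun _ _ ↦ exp_pos _) ⟨i, mem_univ i⟩

theorem softmax_pos (s : Fin C → ℝ) (i : Fin C) : 0 < softmax s i :=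
  div_pos (exp_pos _) (sum_exp_pos s i)

theorem sum_softmax [NeZero C] (s : Fin C → ℝ) : ∑ i, softmax s i = 1 := by
  simp only [softmax, ← sum_div]
  exact div_self (sum_exp_pos s 0).ne'

theorem softmax_add (s ε : Fin C → ℝ) (i : Fin C) :
    softmax (s + ε) i = softmax s i * exp (ε i) / ∑ k, softmax s k * exp (ε k) := by
  simp only [softmax, Pi.add_apply, exp_add, div_mul_eq_mul_div, ← sum_div]
  rw [div_div_div_cancel_right₀ (sum_exp_pos s i).ne']

theorem log_div_softmax_add (s ε : Fin C → ℝ) (i : Fin C) :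
    log (softmax s i / softmax (s + ε) i) = log (∑ k, softmax s k * exp (ε k)) - ε i := by
  have hS : 0 < ∑ k, softmax s k * exp (ε k) :=
    sum_pos (fun k _ ↦ mul_pos (softmax_pos s k) (exp_pos _)) ⟨i, mem_univ i⟩
  rw [softmax_add, div_div_eq_mul_div, mul_div_mul_left _ _ (softmax_pos s i).ne',
    log_div hS.ne' (exp_pos _).ne', log_exp]

theorem kl_softmax_add [NeZero C] (s ε : Fin C → ℝ) :
    ∑ i, softmax s i * log (softmax s i / softmax (s + ε) i) =
      log (∑ i, softmax s i * exp (ε i)) - ∑ i, softmax s i * ε i := by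
  simp only [log_div_softmax_add, mul_sub, sum_sub_distrib, ← sum_mul, sum_softmax, one_mul]

end Softmax

/-- For `p = softmax s` and `p* = softmax (s + ε)`, the Kullback-Leibler divergence is
bounded by half the anchoring loss: `KL(p‖p*) ≤ (1/2) * ∑ i, ε i ^ 2`. -/
theorem kl_softmax_le_half_anchoring_loss (C : ℕ) (hC : 1 ≤ C) (s ε : Fin C → ℝ) :
    ∑ i, softmax s i * Real.log (softmax s i / softmax (s + ε) i) ≤
      (1 / 2) * ∑ i, ε i ^ 2 := by
  have : NeZero C := ⟨by omega⟩
  set R := √(∑ i, ε i ^ 2) with hR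
  have hε : ∀ i, ε i ∈ Set.Icc (-R) R := fun i ↦ abs_le.mp (abs_le_sqrt_sum_sq ε i)
  have hoeffding := log_sum_mul_exp_le_of_mem_Icc (softmax s) ε (fun i ↦ (softmax_pos s i).le)
    (sum_softmax s) hε
  have hR2 : (R - -R) ^ 2 / 8 = 1 / 2 * ∑ i, ε i ^ 2 := by
    rw [← sq_sqrt (sum_nonneg fun i _ ↦ sq_nonneg (ε i)), ← hR]
    ring
  rw [kl_softmax_add]
  linarith
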